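/- Let η be a substitution and u a two-sided periodic point with growing seed. The map rep_u : ℤ → {0,1}D* is strictly increasing with respect to the total order ≺ on {0,1}D*. In particular, rep_u is injective. -/

import Mathlib

open Filter List

variable {A : Type*}

/-- A substitution applied to a word: concatenation of the images of its letters. -/
def substW (η : A → List A) (w : List A) : List A := (w.map η).flatten

/-- The `k`-th iterate of a substitution applied to a word. -/
def iterW (η : A → List A) (k : ℕ) (w : List A) : List A := (substW η)^[k] w

/-- `η` is a substitution: nonempty images and at least one growing letter. -/
def IsSubstitution (η : A → List A) : Prop :=
  (∀ c, η c ≠ []) ∧ ∃ a, Tendsto (fun k => (iterW η k [a]).length) atTop atTop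

/-- `(m i, a i)` for `i = 0, …, len-1` is an `x`-admissible sequence:
`m (i) ++ [a i]` is a prefix of `η (a (i+1))` and `m (len-1) ++ [a (len-1)]`
is a prefix of `η x`. -/
def AdmSeq (η : A → List A) (len : ℕ) (m : ℕ → List A) (a : ℕ → A) (x : A) : Prop :=
  (∀ i, i + 1 < len → (m i ++ [a i]) <+: η (a (i + 1))) ∧
  (1 ≤ len → (m (len - 1) ++ [a (len - 1)]) <+: η x)

/-- `Σ_{j<k} |η^j(m_j)|`. -/
def sumLen (η : A → List A) (k : ℕ) (m : ℕ → List A) : ℕ :=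
  ∑ j ∈ Finset.range k, (iterW η j (m j)).length

/-- `η^{k-1}(m_{k-1}) η^{k-2}(m_{k-2}) ⋯ η^0(m_0)`. -/
def concatDT (η : A → List A) (k : ℕ) (m : ℕ → List A) : List A :=
  ((List.range k).reverse.map (fun j => iterW η j (m j))).flatten

/-- The digit word `|m_{k-1}| ⊙ |m_{k-2}| ⊙ ⋯ ⊙ |m_0|`. -/
def dtDigits (k : ℕ) (m : ℕ → List A) : List ℕ :=
  (List.range k).reverse.map (fun j => (m j).length)

/-- Partial run of the automaton `A_{η,x}`: from state `x`, the digit `d`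
moves to the `d`-th letter of `η x` when `d < |η x|`. -/
def run (η : A → List A) : List ℕ → A → Option A
  | [], x => some x
  | d :: w, x => if h : d < (η x).length then run η w ((η x)[d]) else none

/-- `u` restricted to nonnegative positions is a periodic point of `η` of period `p`:
every `η^p`-image of a prefix of `u` is again a prefix of `u`. -/
def RightPer (η : A → List A) (p : ℕ) (u : ℤ → A) : Prop :=
  ∀ n : ℕ, ∀ j : ℕ, j < (iterW η p (List.ofFn (fun i : Fin (n+1) => u i))).length →
    (iterW η p (List.ofFn (fun i : Fin (n+1) => u i)))[j]? = some (u j)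

/-- `u` restricted to negative positions is a periodic point of `η` of period `p`:
every `η^p`-image of a suffix `u_{-(n+1)} ⋯ u_{-1}` of the left part is again a
suffix of the left part of `u`. -/
def LeftPer (η : A → List A) (p : ℕ) (u : ℤ → A) : Prop :=
  ∀ n : ℕ, ∀ j : ℕ,
    j < (iterW η p (List.ofFn (fun i : Fin (n+1) => u ((i : ℤ) - (n+1))))).length →
    (iterW η p (List.ofFn (fun i : Fin (n+1) => u ((i : ℤ) - (n+1)))))[j]? =
      some (u ((j : ℤ) -
        (iterW η p (List.ofFn (fun i : Fin (n+1) => u ((i : ℤ) - (n+1))))).length))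

/-- `u : ℤ → A` is a two-sided periodic point of `η` of period `p ≥ 1` with
growing seed `u₋₁ | u₀`. -/
def TwoSidedPerPoint (η : A → List A) (p : ℕ) (u : ℤ → A) : Prop :=
  1 ≤ p ∧ RightPer η p u ∧ LeftPer η p u ∧
  Tendsto (fun k => (iterW η k [u 0]).length) atTop atTop ∧
  Tendsto (fun k => (iterW η k [u (-1)]).length) atTop atTop

/-- The Dumont–Thomas decomposition data of a positive integer `n` with respect to
the letter `x` (Theorem of Dumont–Thomas for the right-infinite part):
`p ∣ k`, `p ≤ k`, the sequence is `x`-admissible, `m_{k-1} ⋯ m_{k-p} ≠ ε` and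
`Σ_{j<k} |η^j(m_j)| = n`. -/
def PosSpec (η : A → List A) (p : ℕ) (x : A) (n : ℤ) (k : ℕ) (m : ℕ → List A)
    (a : ℕ → A) : Prop :=
  p ∣ k ∧ p ≤ k ∧ AdmSeq η k m a x ∧ (∃ i, i < p ∧ m (k - 1 - i) ≠ []) ∧
  (sumLen η k m : ℤ) = n

/-- The Dumont–Thomas decomposition data of an integer `n ≤ -2` with respect to
the letter `b` (Theorem of Dumont–Thomas for the left-infinite part). -/
def NegSpec (η : A → List A) (p : ℕ) (b : A) (n : ℤ) (k : ℕ) (m : ℕ → List A)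
    (a : ℕ → A) : Prop :=
  p ∣ k ∧ p ≤ k ∧ AdmSeq η k m a b ∧
  ((List.range p).map (fun i => iterW η (p - 1 - i) (m (k - 1 - i)))).flatten
      ++ [a (k - p)] ≠ iterW η p [b] ∧
  (sumLen η k m : ℤ) = n + (iterW η k [b]).length

/-- `w` is the Dumont–Thomas complement representation `rep_u(n)` of `n ∈ ℤ`. -/
def RepSpec (η : A → List A) (p : ℕ) (u : ℤ → A) (n : ℤ) (w : List ℕ) : Prop :=
  (n = 0 ∧ w = [0]) ∨ (n = -1 ∧ w = [1]) ∨
  (1 ≤ n ∧ ∃ k m a, PosSpec η p (u 0) n k m a ∧ w = 0 :: dtDigits k m) ∨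
  (n ≤ -2 ∧ ∃ k m a, NegSpec η p (u (-1)) n k m a ∧ w = 1 :: dtDigits k m)

/-- Run of the automaton `A_{η,s}` with initial state `start`: the first digit
`0` (resp. `1`) moves to `u 0` (resp. `u (-1)`). -/
def runSeed (η : A → List A) (u : ℤ → A) : List ℕ → Option A
  | [] => none
  | d :: w => if d = 0 then run η w (u 0) else if d = 1 then run η w (u (-1)) else none

/-- `|η^{k-p-1}(m_{k-1}) ⋯ η^0(m_p)|`, the `u`-quotient of a positive integer. -/
def uQuotPos (η : A → List A) (p k : ℕ) (m : ℕ → List A) : ℤ :=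
  ∑ j ∈ Finset.range (k - p), ((iterW η j (m (j + p))).length : ℤ)

/-- `w = tail_{η,p,x}(n)`: the digit word of the unique `x`-admissible sequence of
length `p` whose length-sum is `n`. -/
def TailSpec (η : A → List A) (p : ℕ) (x : A) (n : ℕ) (w : List ℕ) : Prop :=
  ∃ m a, AdmSeq η p m a x ∧ sumLen η p m = n ∧ w = dtDigits p m

/-- Radix order: shorter words first, ties broken lexicographically. -/
def radLt (v w : List ℕ) : Prop :=
  v.length < w.length ∨ (v.length = w.length ∧ List.Lex (· < ·) v w)

/-- Reversed-radix order: longer words first, ties broken lexicographically. -/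
def revLt (v w : List ℕ) : Prop :=
  w.length < v.length ∨ (v.length = w.length ∧ List.Lex (· < ·) v w)

/-- The total order `≺` on `{0,1}D*`. -/
def precLt (v w : List ℕ) : Prop :=
  (v.head? = some 1 ∧ w.head? = some 0) ∨
  (v.head? = some 0 ∧ w.head? = some 0 ∧ radLt v w) ∨
  (v.head? = some 1 ∧ w.head? = some 1 ∧ revLt v w)

/-- The base-2 value `Σ_{i<k} w_i 2^i` of the word `w = w_{k-1} ⋯ w_0`. -/
def natVal2 (w : List ℕ) : ℕ := w.foldl (fun acc d => 2 * acc + d) 0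

/-- The two's complement value `Σ_{i<k} w_i 2^i − w_{k-1} 2^k`. -/
def val2c (w : List ℕ) : ℤ := (natVal2 w : ℤ) - (w.headI : ℤ) * 2 ^ w.length

/-- Fibonacci numbers with `F 0 = 1`, `F 1 = 2`. -/
def fib2 : ℕ → ℕ
  | 0 => 1
  | 1 => 2
  | n + 2 => fib2 (n + 1) + fib2 n

/-- The Fibonacci complement value `Σ_{i<k} w_i F_i − w_{k-1} F_k`
of the word `w = w_{k-1} ⋯ w_0`. -/
def valFc (w : List ℕ) : ℤ :=
  (∑ i ∈ Finset.range w.length, (w.reverse.getD i 0 : ℤ) * fib2 i) -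
    (w.headI : ℤ) * fib2 w.length


/-!
For `n ≥ 1`, `rep_u(n)` is the digit word of a `u₀`-admissible decomposition
`n = Σ_{j<k} |η^j(m_j)|`. Any admissible sequence of length `k` from `x` satisfies
`Σ_{j<k} |η^j(m_j)| < |η^k(x)|`, so for words of equal length the first differing digit decides:
the numeric order is lexicographic. A decomposition of length `q + p` with nonempty top block has
that block as a nonempty prefix of `η^p(u₀)`, which starts with `u₀`; hence its value is at least
`|η^q(u₀)|`, more than the value of any decomposition of length at most `q`, so longer words have
larger values, as in the radix order. On the negative side `η^p(u₋₁)` ends with `u₋₁`, and the same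
counting shows that longer words have smaller values, as in the reversed radix order.
-/

section Substitution

variable {η : A → List A}

lemma substW_append (v w : List A) : substW η (v ++ w) = substW η v ++ substW η w := by
  simp [substW]

lemma substW_singleton (c : A) : substW η [c] = η c := by
  simp [substW]

lemma iterW_succ' (k : ℕ) (w : List A) : iterW η (k + 1) w = substW η (iterW η k w) :=
  Function.iterate_succ_apply' _ _ _

lemma iterW_add (q k : ℕ) (w : List A) : iterW η (q + k) w = iterW η q (iterW η k w) :=
  Function.iterate_add_apply _ _ _ _

lemma iterW_succ_singleton (k : ℕ) (x : A) : iterW η (k + 1) [x] = iterW η k (η x) := by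
  simp [iterW, substW]

lemma iterW_nil (k : ℕ) : iterW η k [] = [] := by
  induction k with
  | zero => rfl
  | succ k ih => rw [iterW_succ', ih]; rfl

lemma iterW_append (k : ℕ) (v w : List A) :
    iterW η k (v ++ w) = iterW η k v ++ iterW η k w := by
  induction k with
  | zero => rfl
  | succ k ih => rw [iterW_succ', iterW_succ', iterW_succ', ih, substW_append]

lemma List.IsPrefix.iterW {v w : List A} (h : v <+: w) (η : A → List A) (k : ℕ) :
    _root_.iterW η k v <+: _root_.iterW η k w := by
  obtain ⟨t, rfl⟩ := h
  exact ⟨_root_.iterW η k t, (iterW_append k v t).symm⟩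

variable (hne : ∀ c, η c ≠ [])
include hne

lemma length_le_length_substW (w : List A) : w.length ≤ (substW η w).length := by
  induction w with
  | nil => rfl
  | cons c w ih =>
    have hc : 1 ≤ (η c).length := List.length_pos_iff.2 (hne c)
    rw [← List.singleton_append, substW_append, substW_singleton, List.length_append,
      List.length_append, List.length_singleton]
    omega

lemma monotone_length_iterW (w : List A) : Monotone fun k => (iterW η k w).length :=
  monotone_nat_of_le_succ fun k => by
    rw [iterW_succ']; exact length_le_length_substW hne _

lemma iterW_ne_nil (k : ℕ) {w : List A} (hw : w ≠ []) : iterW η k w ≠ [] :=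
  List.ne_nil_of_length_pos <|
    (List.length_pos_iff.2 hw).trans_le (monotone_length_iterW hne w (Nat.zero_le k))

end Substitution

section Decomposition

variable {η : A → List A}

lemma sumLen_succ (k : ℕ) (m : ℕ → List A) :
    sumLen η (k + 1) m = sumLen η k m + (iterW η k (m k)).length :=
  Finset.sum_range_succ _ _

lemma dtDigits_succ (k : ℕ) (m : ℕ → List A) :
    dtDigits (k + 1) m = (m k).length :: dtDigits k m := by
  simp [dtDigits, List.range_succ]

lemma length_dtDigits (k : ℕ) (m : ℕ → List A) : (dtDigits k m).length = k := by
  simp [dtDigits]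

lemma concatDT_succ (k : ℕ) (m : ℕ → List A) :
    concatDT η (k + 1) m = iterW η k (m k) ++ concatDT η k m := by
  simp [concatDT, List.range_succ]

lemma length_concatDT (k : ℕ) (m : ℕ → List A) : (concatDT η k m).length = sumLen η k m := by
  induction k with
  | zero => rfl
  | succ k ih => rw [concatDT_succ, sumLen_succ, List.length_append, ih, Nat.add_comm]

lemma concatDT_add (q p : ℕ) (m : ℕ → List A) :
    concatDT η (q + p) m = iterW η q (concatDT η p fun i => m (i + q)) ++ concatDT η q m := by
  induction p with
  | zero => simp [concatDT, iterW_nil]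
  | succ p ih =>
    rw [← Nat.add_assoc, concatDT_succ, ih, concatDT_succ, iterW_append, ← iterW_add,
      Nat.add_comm p q, List.append_assoc]

lemma sumLen_add (q p : ℕ) (m : ℕ → List A) :
    sumLen η (q + p) m = (iterW η q (concatDT η p fun i => m (i + q))).length + sumLen η q m := by
  rw [← length_concatDT, concatDT_add, List.length_append, length_concatDT]

lemma flatten_map_range_eq_concatDT (q p : ℕ) (m : ℕ → List A) :
    ((List.range p).map fun i => iterW η (p - 1 - i) (m (q + p - 1 - i))).flatten =
      concatDT η p fun i => m (i + q) := by
  rw [concatDT, List.range_eq_range', List.reverse_range', List.map_map, ← List.range_eq_range']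
  congr 1
  refine List.map_congr_left fun i hi => ?_
  have : i < p := by simpa using hi
  simp only [Function.comp_apply, Nat.zero_add]
  congr 2
  omega

lemma concatDT_ne_nil (hne : ∀ c, η c ≠ []) {k j : ℕ} {m : ℕ → List A} (hj : j < k)
    (hm : m j ≠ []) : concatDT η k m ≠ [] := by
  simp only [concatDT, ne_eq, List.flatten_eq_nil_iff, List.mem_map, List.mem_reverse,
    List.mem_range, forall_exists_index, and_imp, not_forall]
  exact ⟨_, j, hj, rfl, iterW_ne_nil hne j hm⟩

end Decomposition

namespace AdmSeq

variable {η : A → List A} {k : ℕ} {m m' : ℕ → List A} {a a' : ℕ → A} {x : A}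

lemma top (h : AdmSeq η (k + 1) m a x) : m k ++ [a k] <+: η x := by
  simpa using h.2 (Nat.le_add_left 1 k)

lemma trunc (h : AdmSeq η k m a x) {c : ℕ} (hc : c < k) : AdmSeq η c m a (a c) := by
  refine ⟨fun i hi => h.1 i (by omega), fun hc1 => ?_⟩
  simpa [Nat.sub_add_cancel hc1] using h.1 (c - 1) (by omega)

lemma shift {q p : ℕ} (h : AdmSeq η (q + p) m a x) :
    AdmSeq η p (fun i => m (i + q)) (fun i => a (i + q)) x := by
  refine ⟨fun i hi => by simpa [Nat.add_right_comm] using h.1 (i + q) (by omega),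
    fun hp => ?_⟩
  simpa [show p - 1 + q = q + p - 1 by omega] using h.2 (by omega)

lemma concatDT_append_prefix (h : AdmSeq η k m a x) (hk : 1 ≤ k) :
    concatDT η k m ++ [a 0] <+: iterW η k [x] := by
  induction k, hk using Nat.le_induction generalizing x with
  | base => simpa [concatDT, iterW, substW] using h.top
  | succ k hk ih =>
    rw [concatDT_succ, List.append_assoc, iterW_succ_singleton]
    calc iterW η k (m k) ++ (concatDT η k m ++ [a 0])
        <+: iterW η k (m k) ++ iterW η k [a k] :=
          (List.prefix_append_right_inj _).2 (ih (h.trunc (Nat.lt_succ_self k)))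
      _ = iterW η k (m k ++ [a k]) := (iterW_append k _ _).symm
      _ <+: iterW η k (η x) := h.top.iterW η k

lemma sumLen_lt (h : AdmSeq η k m a x) : sumLen η k m < (iterW η k [x]).length := by
  rcases Nat.eq_zero_or_pos k with rfl | hk
  · simp [sumLen, iterW]
  · rw [← length_concatDT]
    simpa using (h.concatDT_append_prefix hk).length_le

lemma lex_dtDigits_of_sumLen_lt (h : AdmSeq η k m a x) (h' : AdmSeq η k m' a' x)
    (hs : sumLen η k m < sumLen η k m') : List.Lex (· < ·) (dtDigits k m) (dtDigits k m') := by
  induction k generalizing x with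
  | zero => simp [sumLen] at hs
  | succ k ih =>
    rw [dtDigits_succ, dtDigits_succ]
    rw [sumLen_succ, sumLen_succ] at hs
    rcases lt_trichotomy (m k).length (m' k).length with hlt | heq | hgt
    · exact List.Lex.rel hlt
    · have e : m k ++ [a k] = m' k ++ [a' k] :=
        (List.prefix_of_prefix_length_le h.top h'.top (by simp [heq])).eq_of_length
          (by simp [heq])
      obtain ⟨hm, ha⟩ := List.append_inj' e rfl
      rw [hm]
      refine List.Lex.cons (ih (h.trunc (Nat.lt_succ_self k)) ?_ (by rw [hm] at hs; omega))
      simpa [List.singleton_inj.1 ha] using h'.trunc (Nat.lt_succ_self k)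
    · -- then `sumLen η (k + 1) m' < |η^k (m' k ++ [a' k])| ≤ |η^k (m k)| ≤ sumLen η (k + 1) m`
      exfalso
      have hpre : m' k ++ [a' k] <+: m k :=
        List.prefix_of_prefix_length_le h'.top ((List.prefix_append _ _).trans h.top)
          (by simp; omega)
      have hlen := (hpre.iterW η k).length_le
      rw [iterW_append, List.length_append] at hlen
      have := (h'.trunc (Nat.lt_succ_self k)).sumLen_lt
      omega

end AdmSeq

section TopBlock

variable {η : A → List A} {q p : ℕ} {m : ℕ → List A} {a : ℕ → A} {x : A}

lemma AdmSeq.length_iterW_le_sumLen (h : AdmSeq η (q + p) m a x)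
    (hp : 1 ≤ p) (hx : ∃ t, iterW η p [x] = x :: t)
    (htop : (concatDT η p fun i => m (i + q)) ≠ []) :
    (iterW η q [x]).length ≤ sumLen η (q + p) m := by
  obtain ⟨t, ht⟩ := hx
  obtain ⟨c, F, hF⟩ := List.exists_cons_of_ne_nil htop
  have hFx : (concatDT η p fun i => m (i + q)) = x :: F := by
    have hpre := (List.prefix_append _ _).trans (h.shift.concatDT_append_prefix hp)
    rw [ht, hF, List.cons_prefix_cons] at hpre
    rw [hF, hpre.1]
  rw [sumLen_add, hFx, show x :: F = [x] ++ F from rfl, iterW_append, List.length_append]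
  omega

lemma AdmSeq.sumLen_add_length_lt (h : AdmSeq η (q + p) m a x) (hp : 1 ≤ p)
    (hx : ∃ s, iterW η p [x] = s ++ [x])
    (htop : (concatDT η p fun i => m (i + q)) ++ [a q] ≠ iterW η p [x]) :
    sumLen η (q + p) m + (iterW η q [x]).length < (iterW η (q + p) [x]).length := by
  obtain ⟨s, hs⟩ := h.shift.concatDT_append_prefix hp
  simp only [Nat.zero_add] at hs
  obtain ⟨s', rfl⟩ : ∃ s', s = s' ++ [x] := by
    obtain ⟨t, ht⟩ := hx
    rcases List.eq_nil_or_concat s with rfl | ⟨s', c, rfl⟩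
    · exact absurd (by simpa using hs) htop
    · rw [← hs, List.concat_eq_append, ← List.append_assoc] at ht
      rw [List.concat_eq_append]
      exact ⟨s', by rw [List.singleton_inj.1 (List.append_inj' ht rfl).2]⟩
  have hsplit := congrArg List.length (congrArg (iterW η q) hs)
  rw [← iterW_add] at hsplit
  simp only [iterW_append, List.length_append] at hsplit
  have := (h.trunc (show q < q + p by omega)).sumLen_lt
  rw [sumLen_add]
  omega

end TopBlock

section Representation

variable {η : A → List A} {p : ℕ}

lemma RightPer.exists_iterW_eq_cons (hne : ∀ c, η c ≠ []) {u : ℤ → A} (hR : RightPer η p u) :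
    ∃ t, iterW η p [u 0] = u 0 :: t := by
  obtain ⟨c, t, hct⟩ := List.exists_cons_of_ne_nil (iterW_ne_nil hne p (List.cons_ne_nil (u 0) []))
  exact ⟨t, by simpa [hct] using hR 0 0⟩

lemma LeftPer.exists_iterW_eq_append (hne : ∀ c, η c ≠ []) {u : ℤ → A} (hL : LeftPer η p u) :
    ∃ s, iterW η p [u (-1)] = s ++ [u (-1)] := by
  have hpos := List.length_pos_iff.2 (iterW_ne_nil hne p (List.cons_ne_nil (u (-1)) []))
  have h0 := hL 0 ((iterW η p [u (-1)]).length - 1)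
  simp only [List.ofFn_succ, List.ofFn_zero, Fin.val_eq_zero, Nat.cast_zero, zero_add,
    zero_sub] at h0
  rw [Nat.cast_sub hpos, sub_sub_cancel_left, ← List.getLast?_eq_getElem?] at h0
  exact List.getLast?_eq_some_iff.1 (h0 (Nat.sub_one_lt_of_lt hpos))

lemma add_le_of_dvd_of_lt {k₁ k₂ : ℕ} (h₁ : p ∣ k₁) (h₂ : p ∣ k₂) (hk : k₁ < k₂) :
    k₁ + p ≤ k₂ := by
  have := Nat.le_of_dvd (by omega) (Nat.dvd_sub h₂ h₁)
  omega

variable {x : A} {n₁ n₂ : ℤ} {k₁ k₂ : ℕ} {m₁ m₂ : ℕ → List A} {a₁ a₂ : ℕ → A}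

lemma PosSpec.le_of_lt (hne : ∀ c, η c ≠ []) (hp : 1 ≤ p) (hx : ∃ t, iterW η p [x] = x :: t)
    (h₁ : PosSpec η p x n₁ k₁ m₁ a₁) (h₂ : PosSpec η p x n₂ k₂ m₂ a₂) (hn : n₁ < n₂) :
    k₁ ≤ k₂ := by
  obtain ⟨hd₁, -, ha₁, ⟨i, hi, hmi⟩, rfl⟩ := h₁
  obtain ⟨hd₂, -, ha₂, -, rfl⟩ := h₂
  by_contra! hk
  have hkp := add_le_of_dvd_of_lt hd₂ hd₁ hk
  obtain ⟨q, rfl⟩ : ∃ q, k₁ = q + p := ⟨k₁ - p, by omega⟩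
  have htop : (concatDT η p fun j => m₁ (j + q)) ≠ [] :=
    concatDT_ne_nil hne (j := p - 1 - i) (by omega)
      (by rwa [show p - 1 - i + q = q + p - 1 - i by omega])
  have := ha₁.length_iterW_le_sumLen hp hx htop
  have := ha₂.sumLen_lt
  have : (iterW η k₂ [x]).length ≤ (iterW η q [x]).length :=
    monotone_length_iterW hne [x] (by omega)
  omega

lemma NegSpec.le_of_lt (hne : ∀ c, η c ≠ []) (hp : 1 ≤ p) (hx : ∃ s, iterW η p [x] = s ++ [x])
    (h₁ : NegSpec η p x n₁ k₁ m₁ a₁) (h₂ : NegSpec η p x n₂ k₂ m₂ a₂) (hn : n₁ < n₂) :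
    k₂ ≤ k₁ := by
  obtain ⟨hd₁, -, -, -, hs₁⟩ := h₁
  obtain ⟨hd₂, -, ha₂, htop, hs₂⟩ := h₂
  by_contra! hk
  have hkp := add_le_of_dvd_of_lt hd₁ hd₂ hk
  obtain ⟨q, rfl⟩ : ∃ q, k₂ = q + p := ⟨k₂ - p, by omega⟩
  rw [show q + p - p = q by omega, flatten_map_range_eq_concatDT] at htop
  have := ha₂.sumLen_add_length_lt hp hx htop
  have : (iterW η k₁ [x]).length ≤ (iterW η q [x]).length :=
    monotone_length_iterW hne [x] (by omega)
  omega

lemma radLt_of_posSpec (hne : ∀ c, η c ≠ []) (hp : 1 ≤ p) (hx : ∃ t, iterW η p [x] = x :: t)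
    (h₁ : PosSpec η p x n₁ k₁ m₁ a₁) (h₂ : PosSpec η p x n₂ k₂ m₂ a₂) (hn : n₁ < n₂) :
    radLt (0 :: dtDigits k₁ m₁) (0 :: dtDigits k₂ m₂) := by
  rcases (h₁.le_of_lt hne hp hx h₂ hn).lt_or_eq with hk | rfl
  · left
    simpa [length_dtDigits] using hk
  · obtain ⟨-, -, ha₁, -, hs₁⟩ := h₁
    obtain ⟨-, -, ha₂, -, hs₂⟩ := h₂
    exact Or.inr ⟨by simp [length_dtDigits],
      .cons (ha₁.lex_dtDigits_of_sumLen_lt ha₂ (by omega))⟩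

lemma revLt_of_negSpec (hne : ∀ c, η c ≠ []) (hp : 1 ≤ p) (hx : ∃ s, iterW η p [x] = s ++ [x])
    (h₁ : NegSpec η p x n₁ k₁ m₁ a₁) (h₂ : NegSpec η p x n₂ k₂ m₂ a₂) (hn : n₁ < n₂) :
    revLt (1 :: dtDigits k₁ m₁) (1 :: dtDigits k₂ m₂) := by
  rcases (h₁.le_of_lt hne hp hx h₂ hn).lt_or_eq with hk | rfl
  · left
    simpa [length_dtDigits] using hk
  · obtain ⟨-, -, ha₁, -, hs₁⟩ := h₁
    obtain ⟨-, -, ha₂, -, hs₂⟩ := h₂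
    exact Or.inr ⟨by simp [length_dtDigits],
      .cons (ha₁.lex_dtDigits_of_sumLen_lt ha₂ (by omega))⟩

lemma precLt_irrefl (w : List ℕ) : ¬ precLt w w := by
  rintro (⟨h₁, h₂⟩ | ⟨-, -, h | ⟨-, h⟩⟩ | ⟨-, -, h | ⟨-, h⟩⟩)
  · simp [h₁] at h₂
  all_goals first | exact lt_irrefl _ h | exact List.lex_irrefl (lt_irrefl ·) _ h

lemma precLt_of_repSpec_of_lt (hne : ∀ c, η c ≠ []) (hp : 1 ≤ p) {u : ℤ → A}
    (hhead : ∃ t, iterW η p [u 0] = u 0 :: t) (hlast : ∃ s, iterW η p [u (-1)] = s ++ [u (-1)])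
    {w₁ w₂ : List ℕ} (h₁ : RepSpec η p u n₁ w₁) (h₂ : RepSpec η p u n₂ w₂) (hn : n₁ < n₂) :
    precLt w₁ w₂ := by
  rcases h₁ with ⟨rfl, rfl⟩ | ⟨rfl, rfl⟩ | ⟨hn₁, k₁, m₁, a₁, hr₁, rfl⟩ |
    ⟨hn₁, k₁, m₁, a₁, hr₁, rfl⟩ <;>
  rcases h₂ with ⟨rfl, rfl⟩ | ⟨rfl, rfl⟩ | ⟨hn₂, k₂, m₂, a₂, hr₂, rfl⟩ |
    ⟨hn₂, k₂, m₂, a₂, hr₂, rfl⟩ <;>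
  first | omega | exact Or.inl ⟨rfl, rfl⟩ | skip
  · refine Or.inr (Or.inl ⟨rfl, rfl, Or.inl ?_⟩)
    simpa [length_dtDigits] using hr₂.2.1.trans_lt' hp
  · exact Or.inr (Or.inl ⟨rfl, rfl, radLt_of_posSpec hne hp hhead hr₁ hr₂ hn⟩)
  · refine Or.inr (Or.inr ⟨rfl, rfl, Or.inl ?_⟩)
    simpa [length_dtDigits] using hr₁.2.1.trans_lt' hp
  · exact Or.inr (Or.inr ⟨rfl, rfl, revLt_of_negSpec hne hp hlast hr₁ hr₂ hn⟩)

end Representation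

theorem rep_strict_mono_general (η : A → List A) (hη : IsSubstitution η)
    (p : ℕ) (u : ℤ → A) (hu : TwoSidedPerPoint η p u) :
    ∀ (m n : ℤ) (wm wn : List ℕ),
      RepSpec η p u m wm → RepSpec η p u n wn →
      (m < n → precLt wm wn) ∧ (m ≠ n → wm ≠ wn) := by
  obtain ⟨hne, -⟩ := hη
  obtain ⟨hp, hR, hL, -, -⟩ := hu
  have hlt {m n : ℤ} {wm wn : List ℕ} : RepSpec η p u m wm → RepSpec η p u n wn → m < n →
      precLt wm wn :=
    precLt_of_repSpec_of_lt hne hp (hR.exists_iterW_eq_cons hne) (hL.exists_iterW_eq_append hne)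
  refine fun m n wm wn hm hn => ⟨hlt hm hn, fun hmn hw => ?_⟩
  subst hw
  rcases hmn.lt_or_gt with h | h
  · exact precLt_irrefl wm (hlt hm hn h)
  · exact precLt_irrefl wm (hlt hn hm h)

/-- The map `rep_u : ℤ → {0,1}D*` is strictly increasing with
respect to the total order `≺`; in particular it is injective. -/
theorem rep_strict_mono [Finite A] (η : A → List A) (hη : IsSubstitution η)
    (p : ℕ) (u : ℤ → A) (hu : TwoSidedPerPoint η p u) :
    ∀ (m n : ℤ) (wm wn : List ℕ),
      RepSpec η p u m wm → RepSpec η p u n wn →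
      (m < n → precLt wm wn) ∧ (m ≠ n → wm ≠ wn) :=
  rep_strict_mono_general η hη p u hu
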